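/- Equivalence of initial clustering and weighted cut: let π = {C_1,...,C_m} be a partition of V and G̃ the coarsened doubly-weighted graph with W̃_{pq} = Σ_{x∈C_p,y∈C_q} W_{xy} and m̃_p = Σ_{x∈C_p} d_x. For any partition π̃ = {B_1,...,B_k} of the supernodes, let π' = {B_1',...,B_k'} be the induced partition of V given by B_i' = ∪_{p∈B_i} C_p. Then Ncut_G(π') = Wcut_{G̃}(π̃), where Ncut_G(π') = Σ_i Cut(B_i', V∖B_i')/vol(B_i') and Wcut_{G̃}(π̃) = Σ_i Cut_{G̃}(B_i, complement)/mvol_{G̃}(B_i). -/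
import Mathlib


open Finset

/-- Equivalence of initial clustering and weighted cut: for a partition `{C_1,…,C_m}` of `V`,
the coarsened graph `G̃` with `W̃_{pq} = Σ_{x∈C_p,y∈C_q} W_{xy}`, `m̃_p = Σ_{x∈C_p} d_x`,
and any partition `{B_1,…,B_k}` of the supernodes inducing the partition `B_i' = ∪_{p∈B_i} C_p`
of `V`, we have `Ncut_G(π') = Wcut_{G̃}(π̃)`. -/
theorem ncut_eq_wcut_on_coarsened_graph
    (n M k : ℕ) (W : Matrix (Fin n) (Fin n) ℝ)
    (hWsym : W.IsSymm) (hWnn : ∀ i j, 0 ≤ W i j)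
    (d : Fin n → ℝ) (hd : ∀ x, d x = ∑ y, W x y)
    (C : Fin M → Finset (Fin n))
    (hdisj : ∀ p q, p ≠ q → Disjoint (C p) (C q))
    (hcover : Finset.univ.biUnion C = (Finset.univ : Finset (Fin n)))
    (Wt : Matrix (Fin M) (Fin M) ℝ)
    (hWt : ∀ p q, Wt p q = ∑ x ∈ C p, ∑ y ∈ C q, W x y)
    (mt : Fin M → ℝ) (hmt : ∀ p, mt p = ∑ x ∈ C p, d x)
    (B : Fin k → Finset (Fin M))
    (hBdisj : ∀ i j, i ≠ j → Disjoint (B i) (B j))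
    (hBcover : Finset.univ.biUnion B = (Finset.univ : Finset (Fin M)))
    (B' : Fin k → Finset (Fin n)) (hB' : ∀ i, B' i = (B i).biUnion C)
    (hB'ne : ∀ i, (B' i).Nonempty)
    (hvolpos : ∀ i, 0 < ∑ x ∈ B' i, d x) :
    ∑ i, (∑ x ∈ B' i, ∑ y ∈ (B' i)ᶜ, W x y) / (∑ x ∈ B' i, d x) =
      ∑ i, (∑ p ∈ B i, ∑ q ∈ (B i)ᶜ, Wt p q) / (∑ p ∈ B i, mt p) := by
  apply Finset.sum_congr rfl
  intro i _
  have hden : ∑ x ∈ B' i, d x = ∑ p ∈ B i, mt p := by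
    rw [hB' i, Finset.sum_biUnion (fun p _ q _ hpq => hdisj p q hpq)]
    exact Finset.sum_congr rfl fun p _ => (hmt p).symm
  have hcomp : (B' i)ᶜ = ((B i)ᶜ).biUnion C := by
    ext x
    simp only [Finset.mem_compl, hB' i, Finset.mem_biUnion]
    constructor
    · intro hx
      have hx' : x ∈ Finset.univ.biUnion C := hcover ▸ Finset.mem_univ x
      obtain ⟨p, _, hxp⟩ := Finset.mem_biUnion.mp hx'
      exact ⟨p, fun hpB => hx ⟨p, hpB, hxp⟩, hxp⟩
    · rintro ⟨p, hp, hxp⟩ ⟨q, hq, hxq⟩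
      have hpq : p = q := by
        by_contra h
        exact (Finset.disjoint_left.mp (hdisj p q h)) hxp hxq
      exact hp (hpq ▸ hq)
  have hnum : ∑ x ∈ B' i, ∑ y ∈ (B' i)ᶜ, W x y
      = ∑ p ∈ B i, ∑ q ∈ (B i)ᶜ, Wt p q := by
    rw [hcomp, hB' i, Finset.sum_biUnion (fun p _ q _ hpq => hdisj p q hpq)]
    refine Finset.sum_congr rfl fun p _ => ?_
    calc ∑ x ∈ C p, ∑ y ∈ ((B i)ᶜ).biUnion C, W x y
        = ∑ x ∈ C p, ∑ q ∈ (B i)ᶜ, ∑ y ∈ C q, W x y :=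
          Finset.sum_congr rfl fun x _ =>
            Finset.sum_biUnion (fun a _ b _ hab => hdisj a b hab)
      _ = ∑ q ∈ (B i)ᶜ, ∑ x ∈ C p, ∑ y ∈ C q, W x y := Finset.sum_comm
      _ = ∑ q ∈ (B i)ᶜ, Wt p q := Finset.sum_congr rfl fun q _ => (hWt p q).symm
  rw [hden, hnum]
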